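/- Let A, B, C be semi-algebraic subsets of R^D with A and B both dense in C. Then A ∩ B is dense in C. -/

import Mathlib

/-!
A semi-algebraic set is a finite union of locally closed sets. In a Baire space, a dense finite
union of locally closed sets has dense interior, since each locally closed piece is open in its
closure and the closures of the pieces cover the space. Inside the complete space `closure C`,
the sets `A` and `B` therefore both contain dense open subsets, whose intersection is again
dense and lies in `A ∩ B`.
-/

/-- A semi-algebraic subset of `ℝ^D`: a finite union of finite intersections
of sets cut out by a polynomial equality and a strict polynomial inequality. -/
def IsSemialgebraic {D : ℕ} (s : Set (Fin D → ℝ)) : Prop :=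
  ∃ (m k : ℕ) (p q : Fin m → Fin k → MvPolynomial (Fin D) ℝ),
    s = ⋃ i, ⋂ j, {x | MvPolynomial.eval x (p i j) = 0 ∧
        0 < MvPolynomial.eval x (q i j)}

open Set

section Baire

variable {X : Type*} [TopologicalSpace X]

theorem IsLocallyClosed.interior_closure_subset_closure_interior {t : Set X}
    (ht : IsLocallyClosed t) : interior (closure t) ⊆ closure (interior t) := by
  have hsub : interior (closure t) ∩ coborder t ⊆ interior t :=
    (isOpen_interior.inter ht.isOpen_coborder).subset_interior_iff.mpr <|
      (inter_subset_inter_left _ interior_subset).trans closure_inter_coborder.subset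
  exact (dense_coborder.open_subset_closure_inter isOpen_interior).trans (closure_mono hsub)

theorem Dense.interior_iUnion_of_isLocallyClosed [BaireSpace X] {ι : Type*} [Finite ι]
    {t : ι → Set X} (ht : ∀ i, IsLocallyClosed (t i)) (hd : Dense (⋃ i, t i)) :
    Dense (interior (⋃ i, t i)) := by
  have hcover : ⋃ i, closure (t i) = univ := by
    rw [← closure_iUnion_of_finite, hd.closure_eq]
  refine dense_closure.mp <|
    (dense_iUnion_interior_of_closed (fun _ => isClosed_closure) hcover).mono ?_
  exact iUnion_subset fun i => (ht i).interior_closure_subset_closure_interior.trans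
    (closure_mono (interior_mono (subset_iUnion t i)))

theorem dense_preimage_val_closure {s c : Set X} (hsc : s ⊆ c) (hcs : c ⊆ closure s) :
    Dense ((↑) ⁻¹' s : Set (closure c)) := by
  rw [Subtype.dense_iff, image_preimage_eq_inter_range, Subtype.range_coe,
    inter_eq_left.mpr (hsc.trans subset_closure)]
  exact closure_minimal hcs isClosed_closure

end Baire

theorem IsSemialgebraic.exists_eq_iUnion_isLocallyClosed {D : ℕ} {s : Set (Fin D → ℝ)}
    (hs : IsSemialgebraic s) :
    ∃ (m : ℕ) (t : Fin m → Set (Fin D → ℝ)), (∀ i, IsLocallyClosed (t i)) ∧ s = ⋃ i, t i := by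
  obtain ⟨m, k, p, q, rfl⟩ := hs
  refine ⟨m, _, fun i => ⟨⋂ j, {x | 0 < MvPolynomial.eval x (q i j)},
    ⋂ j, {x | MvPolynomial.eval x (p i j) = 0}, ?_, ?_, ?_⟩, rfl⟩
  · exact isOpen_iInter_of_finite fun j =>
      isOpen_lt continuous_const (MvPolynomial.continuous_eval _)
  · exact isClosed_iInter fun j => isClosed_eq (MvPolynomial.continuous_eval _) continuous_const
  · ext x
    simp only [mem_iInter, mem_inter_iff, mem_ofPred_eq, forall_and, and_comm]

theorem IsSemialgebraic.dense_interior_preimage_val_closure {D : ℕ} {s c : Set (Fin D → ℝ)}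
    (hs : IsSemialgebraic s) (hsc : s ⊆ c) (hcs : c ⊆ closure s) :
    Dense (interior ((↑) ⁻¹' s : Set (closure c))) := by
  have : CompleteSpace (closure c) := isClosed_closure.completeSpace_coe
  obtain ⟨m, t, ht, rfl⟩ := hs.exists_eq_iUnion_isLocallyClosed
  have hd := dense_preimage_val_closure hsc hcs
  rw [preimage_iUnion] at hd ⊢
  exact hd.interior_iUnion_of_isLocallyClosed fun i => (ht i).preimage continuous_subtype_val

theorem stmt10_general {D : ℕ} (A B C : Set (Fin D → ℝ))
    (hA : IsSemialgebraic A) (hB : IsSemialgebraic B)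
    (hAC : A ⊆ C) (hBC : B ⊆ C)
    (hdA : C ⊆ closure A) (hdB : C ⊆ closure B) :
    C ⊆ closure (A ∩ B) := by
  have hAB : Dense ((↑) ⁻¹' (A ∩ B) : Set (closure C)) :=
    ((hA.dense_interior_preimage_val_closure hAC hdA).inter_of_isOpen_left
      (hB.dense_interior_preimage_val_closure hBC hdB) isOpen_interior).mono
      (inter_subset_inter interior_subset interior_subset)
  rw [Subtype.dense_iff] at hAB
  exact subset_closure.trans (hAB.trans (closure_mono (image_preimage_subset _ _)))

/-- if `A` and `B` are semi-algebraic subsets of `C`, each dense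
in the semi-algebraic set `C`, then `A ∩ B` is dense in `C`. -/
theorem stmt10 {D : ℕ} (A B C : Set (Fin D → ℝ))
    (hA : IsSemialgebraic A) (hB : IsSemialgebraic B) (hC : IsSemialgebraic C)
    (hAC : A ⊆ C) (hBC : B ⊆ C)
    (hdA : C ⊆ closure A) (hdB : C ⊆ closure B) :
    C ⊆ closure (A ∩ B) :=
  stmt10_general A B C hA hB hAC hBC hdA hdB
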